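/- arXiv:2109.13186 — 5 statements merged into one kernel-verified Lean document; each statement's English description precedes it below -/
import Mathlib

section
/- In the parity-preserving-random system, the time-delayed mutual information I(X_t; X_{t+1}) equals 1 bit, each individual storage I(Xⁱ_t; Xⁱ_{t+1}) equals 0, and hence Φ^WMS = 1 bit. -/
open Finset

/-- Mutual information (in bits) between two finite random variables
with joint pmf `p`. -/
noncomputable def mi {α β : Type*} [Fintype α] [Fintype β]
    (p : α → β → ℝ) : ℝ :=
  ∑ x, ∑ y, (if p x y = 0 then 0 else
    p x y * Real.logb 2 (p x y / ((∑ y', p x y') * (∑ x', p x' y))))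

/-- Conditional mutual information (in bits) `I(X;Y|Z)` for joint pmf `p x y z`. -/
noncomputable def cmi {α β γ : Type*} [Fintype α] [Fintype β] [Fintype γ]
    (p : α → β → γ → ℝ) : ℝ :=
  ∑ x, ∑ y, ∑ z, (if p x y z = 0 then 0 else
    p x y z * Real.logb 2 ((p x y z * (∑ x', ∑ y', p x' y' z)) /
      ((∑ y', p x y' z) * (∑ x', p x' y z))))

/-- Joint pmf of the parity-preserving-random system: `X¹ₜ, X²ₜ` i.i.d. fair
coins; `(X¹ₜ₊₁, X²ₜ₊₁)` uniform over the pairs of the same parity as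
`(X¹ₜ, X²ₜ)`. -/
noncomputable def pprSys (x1 x2 y1 y2 : Bool) : ℝ :=
  if xor y1 y2 = xor x1 x2 then 1/8 else 0

/-- in the PPR system, TDMI = 1 bit, each individual storage is 0,
hence Φ^WMS = 1 bit. -/
theorem ppr_wms_phi :
    mi (fun (a b : Bool × Bool) => pprSys a.1 a.2 b.1 b.2) = 1 ∧
    mi (fun x1 y1 => ∑ x2, ∑ y2, pprSys x1 x2 y1 y2) = 0 ∧
    mi (fun x2 y2 => ∑ x1, ∑ y1, pprSys x1 x2 y1 y2) = 0 ∧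
    mi (fun (a b : Bool × Bool) => pprSys a.1 a.2 b.1 b.2)
      - mi (fun x1 y1 => ∑ x2, ∑ y2, pprSys x1 x2 y1 y2)
      - mi (fun x2 y2 => ∑ x1, ∑ y1, pprSys x1 x2 y1 y2) = 1 := by
  have h2 : Real.logb 2 2 = 1 := by simp [Real.logb_self_eq_one]
  refine ⟨?_, ?_, ?_, ?_⟩ <;>
  · simp only [mi, pprSys, Fintype.sum_prod_type, Fintype.sum_bool]
    norm_num [h2]
end

section
/- In the parity-preserving-random system, both transfer entropies are zero: I(X¹_t; X²_{t+1} | X²_t) = 0 and I(X²_t; X¹_{t+1} | X¹_t) = 0, and hence the unnormalized causal density is zero even though TDMI = 1 bit. -/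
open Finset

/-- in the PPR system both transfer entropies vanish (hence the
unnormalized causal density is zero) even though TDMI = 1 bit. -/
theorem ppr_te_zero :
    cmi (fun x1 y2 x2 => ∑ y1, pprSys x1 x2 y1 y2) = 0 ∧
    cmi (fun x2 y1 x1 => ∑ y2, pprSys x1 x2 y1 y2) = 0 ∧
    cmi (fun x1 y2 x2 => ∑ y1, pprSys x1 x2 y1 y2)
      + cmi (fun x2 y1 x1 => ∑ y2, pprSys x1 x2 y1 y2) = 0 ∧
    mi (fun (a b : Bool × Bool) => pprSys a.1 a.2 b.1 b.2) = 1 := by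
  simp [cmi, mi, pprSys, Fintype.sum_prod_type, Fintype.sum_bool]
  norm_num [Real.logb, Real.log_div, mul_comm]
end

section
/- In the fully redundant system where X¹_t = X²_t = X¹_{t+1} = X²_{t+1} = Z for a fair coin flip Z, the whole-minus-sum integrated information Φ^WMS equals −1 bit. -/
open Finset

noncomputable def redSys (x1 x2 y1 y2 : Bool) : ℝ :=
  if x1 = x2 ∧ x2 = y1 ∧ y1 = y2 then 1/2 else 0

/-- in the fully redundant system, Φ^WMS = −1 bit. -/
theorem red_wms_phi_neg :
    mi (fun (a b : Bool × Bool) => redSys a.1 a.2 b.1 b.2)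
      - mi (fun x1 y1 => ∑ x2, ∑ y2, redSys x1 x2 y1 y2)
      - mi (fun x2 y2 => ∑ x1, ∑ y1, redSys x1 x2 y1 y2) = -1 := by
  simp only [mi, redSys, Fintype.sum_prod_type, Fintype.sum_bool]
  norm_num [Real.logb, Real.log_ne_zero_of_pos_of_ne_one]
end

section
/- The unnormalized causal density uCD = I(X¹_t; X²_{t+1} | X²_t) + I(X²_t; X¹_{t+1} | X¹_t) can strictly exceed the time-delayed mutual information: in the system where X¹_t is a fair coin flip, X²_t = X¹_t, and X¹_{t+1} = X²_{t+1} is a fresh fair coin flip XORed with X¹_t, uCD = 2 > 1 = TDMI. -/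
open Finset

/-- Joint pmf: `X¹ₜ, X²ₜ` i.i.d. fair coins, `X¹ₜ₊₁ = X²ₜ₊₁ = X¹ₜ XOR X²ₜ`. -/
noncomputable def xorBothSys (x1 x2 y1 y2 : Bool) : ℝ :=
  if y1 = xor x1 x2 ∧ y2 = xor x1 x2 then 1/4 else 0

/-- the unnormalized causal density
`uCD = TE(1→2) + TE(2→1)` can strictly exceed the TDMI: here uCD = 2 > 1 = TDMI. -/
theorem ucd_exceeds_tdmi :
    cmi (fun x1 y2 x2 => ∑ y1, xorBothSys x1 x2 y1 y2)
      + cmi (fun x2 y1 x1 => ∑ y2, xorBothSys x1 x2 y1 y2) = 2 ∧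
    mi (fun (a b : Bool × Bool) => xorBothSys a.1 a.2 b.1 b.2) = 1 ∧
    mi (fun (a b : Bool × Bool) => xorBothSys a.1 a.2 b.1 b.2)
      < cmi (fun x1 y2 x2 => ∑ y1, xorBothSys x1 x2 y1 y2)
        + cmi (fun x2 y1 x1 => ∑ y2, xorBothSys x1 x2 y1 y2) := by
  have h1 : cmi (fun x1 y2 x2 => ∑ y1, xorBothSys x1 x2 y1 y2)
      + cmi (fun x2 y1 x1 => ∑ y2, xorBothSys x1 x2 y1 y2) = 2 := by
    simp only [cmi, xorBothSys, Fintype.sum_bool]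
    norm_num [Real.logb_self_eq_one]
  have h2 : mi (fun (a b : Bool × Bool) => xorBothSys a.1 a.2 b.1 b.2) = 1 := by
    simp only [mi, xorBothSys, Fintype.sum_prod_type, Fintype.sum_bool]
    norm_num [Real.logb_self_eq_one]
  exact ⟨h1, h2, by rw [h1, h2]; norm_num⟩
end

section
/- In the system X¹_{t+1} = X²_{t+1} = X¹_t XOR X²_t with X¹_t, X²_t i.i.d. fair coin flips, both transfer entropies equal 1 bit while the TDMI equals 1 bit, so their sum double-counts: TE(1→2) + TE(2→1) = 2·TDMI. -/
open Finset

lemma logb24 : Real.logb 2 4 = 2 := by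
  rw [show (4:ℝ) = 2^(2:ℕ) by norm_num, Real.logb_pow, Real.logb_self_eq_one] <;> norm_num

/-- TE(1→2) = TE(2→1) = 1 bit and TDMI = 1 bit, so
TE(1→2) + TE(2→1) = 2 · TDMI. -/
theorem te_double_counts :
    cmi (fun x1 y2 x2 => ∑ y1, xorBothSys x1 x2 y1 y2) = 1 ∧
    cmi (fun x2 y1 x1 => ∑ y2, xorBothSys x1 x2 y1 y2) = 1 ∧
    mi (fun (a b : Bool × Bool) => xorBothSys a.1 a.2 b.1 b.2) = 1 ∧
    cmi (fun x1 y2 x2 => ∑ y1, xorBothSys x1 x2 y1 y2)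
      + cmi (fun x2 y1 x1 => ∑ y2, xorBothSys x1 x2 y1 y2)
      = 2 * mi (fun (a b : Bool × Bool) => xorBothSys a.1 a.2 b.1 b.2) := by
  have h1 : cmi (fun x1 y2 x2 => ∑ y1, xorBothSys x1 x2 y1 y2) = 1 := by
    simp [cmi, xorBothSys, Fintype.sum_bool]
    norm_num [Real.logb_self_eq_one, logb24]
  have h2 : cmi (fun x2 y1 x1 => ∑ y2, xorBothSys x1 x2 y1 y2) = 1 := by
    simp [cmi, xorBothSys, Fintype.sum_bool]
    norm_num [Real.logb_self_eq_one, logb24]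
  have h3 : mi (fun (a b : Bool × Bool) => xorBothSys a.1 a.2 b.1 b.2) = 1 := by
    simp [mi, xorBothSys, Fintype.sum_prod_type, Fintype.sum_bool]
    norm_num [Real.logb_self_eq_one, logb24]
  exact ⟨h1, h2, h3, by rw [h1, h2, h3]; ring⟩
end
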